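/- Let m ≥ 2 and n ≥ 1 be integers and let ν ↦ A_ν be a linear Hermitian family of 2n×2n matrices such that A_ν is invertible for every ν ∈ ℝ^m with |ν| = 1. Then for every ν ∈ ℝ^m, det(A_ν) is a real number and |det(A_ν)| = (−1)^n · det(A_ν). -/

import Mathlib

/-!
For a unit vector `ν`, the invertible Hermitian matrix `A ν` has a negative index of inertia (the
largest dimension of a subspace on which its form is negative definite), and this index equals its
number of negative eigenvalues. For a self-adjoint `T` with `‖T x‖ ≥ δ ‖x‖`, no perturbation of
operator norm less than `δ` changes the index, so along the unit sphere it is locally constant,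
hence constant, the sphere being connected because `m ≥ 2`. Since `A (-ν) = -A ν` swaps the negative and positive indices, whose sum
is `2n`, both equal `n`. Thus `det (A ν)`, the product of the eigenvalues, has sign `(-1)ⁿ`; the
case of a general `ν` follows by homogeneity.
-/

open Module Finset Metric Filter Topology RCLike
open scoped InnerProductSpace

namespace ContinuousLinearMap

variable {𝕜 E ι : Type*} [RCLike 𝕜] [NormedAddCommGroup E] [InnerProductSpace 𝕜 E]

/-- The negative index of inertia of `T`. The set is bounded by `finrank 𝕜 E` when `E` is
finite-dimensional; otherwise `sSup` may return the junk value `0`. -/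
noncomputable def negIndex (T : E →L[𝕜] E) : ℕ :=
  sSup {d | ∃ W : Submodule 𝕜 E, finrank 𝕜 W = d ∧ ∀ x ∈ W, x ≠ 0 → re ⟪T x, x⟫_𝕜 < 0}

section Eigenbasis

variable [Fintype ι] {T : E →L[𝕜] E} (b : OrthonormalBasis ι 𝕜 E) {μ : ι → ℝ}

lemma _root_.OrthonormalBasis.finrank_span_image (S : Finset ι) :
    finrank 𝕜 (Submodule.span 𝕜 (b '' S)) = #S := by
  rw [Set.image_eq_range, finrank_span_eq_card]
  · simp
  · exact b.orthonormal.linearIndependent.comp _ Subtype.val_injective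

lemma _root_.OrthonormalBasis.inner_eq_zero_of_mem_span_image {S : Finset ι} {x : E}
    (hx : x ∈ Submodule.span 𝕜 (b '' S)) {i : ι} (hi : i ∉ S) : ⟪b i, x⟫_𝕜 = 0 := by
  refine (Submodule.mem_orthogonal_singleton_iff_inner_right).1 (Submodule.span_le.2 ?_ hx)
  rintro _ ⟨j, hj, rfl⟩
  exact (Submodule.mem_orthogonal_singleton_iff_inner_right).2
    (b.orthonormal.2 fun h => hi (h ▸ hj))

variable {b}

lemma re_inner_apply_self_eq_sum (hb : ∀ i, T (b i) = (μ i : 𝕜) • b i) (x : E) :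
    re ⟪T x, x⟫_𝕜 = ∑ i, μ i * ‖⟪b i, x⟫_𝕜‖ ^ 2 := by
  have hTx : T x = ∑ i, ((μ i : 𝕜) * ⟪b i, x⟫_𝕜) • b i := by
    conv_lhs => rw [← b.sum_repr' x]
    simp only [map_sum, map_smul, hb, smul_smul, mul_comm]
  rw [hTx, sum_inner, map_sum]
  refine Fintype.sum_congr _ _ fun i => ?_
  rw [inner_smul_left, (starRingEnd 𝕜).map_mul, conj_ofReal, mul_assoc, RCLike.conj_mul,
    ← ofReal_pow, ← ofReal_mul, ofReal_re]

lemma re_inner_apply_self_le_of_mem_span_image (hb : ∀ i, T (b i) = (μ i : 𝕜) • b i)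
    {S : Finset ι} {c : ℝ} (hμ : ∀ i ∈ S, μ i ≤ c) {x : E}
    (hx : x ∈ Submodule.span 𝕜 (b '' S)) : re ⟪T x, x⟫_𝕜 ≤ c * ‖x‖ ^ 2 := by
  rw [re_inner_apply_self_eq_sum hb, ← b.sum_sq_norm_inner_right, mul_sum]
  refine sum_le_sum fun i _ => ?_
  by_cases hi : i ∈ S
  · exact mul_le_mul_of_nonneg_right (hμ i hi) (sq_nonneg _)
  · simp [b.inner_eq_zero_of_mem_span_image hx hi]

lemma le_re_inner_apply_self_of_mem_span_image (hb : ∀ i, T (b i) = (μ i : 𝕜) • b i)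
    {S : Finset ι} {c : ℝ} (hμ : ∀ i ∈ S, c ≤ μ i) {x : E}
    (hx : x ∈ Submodule.span 𝕜 (b '' S)) : c * ‖x‖ ^ 2 ≤ re ⟪T x, x⟫_𝕜 := by
  have := re_inner_apply_self_le_of_mem_span_image (T := -T) (μ := -μ) (c := -c)
    (fun i => by simp [hb]) (fun i hi => neg_le_neg (hμ i hi)) hx
  simp only [neg_apply, inner_neg_left, map_neg, neg_mul] at this
  linarith

lemma re_inner_apply_self_neg_of_mem_span_image (hb : ∀ i, T (b i) = (μ i : 𝕜) • b i)
    {S : Finset ι} (hμ : ∀ i ∈ S, μ i < 0) {x : E}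
    (hx : x ∈ Submodule.span 𝕜 (b '' S)) (hx0 : x ≠ 0) : re ⟪T x, x⟫_𝕜 < 0 := by
  obtain ⟨i, hi⟩ : ∃ i, ⟪b i, x⟫_𝕜 ≠ 0 := by
    by_contra! h
    exact hx0 (by simpa [h] using (b.sum_repr' x).symm)
  have hiS : i ∈ S := by_contra (hi ∘ b.inner_eq_zero_of_mem_span_image hx)
  rw [re_inner_apply_self_eq_sum hb]
  refine sum_neg' (fun j _ => ?_)
    ⟨i, mem_univ i, mul_neg_of_neg_of_pos (hμ i hiS) (by positivity)⟩
  by_cases hj : j ∈ S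
  · exact mul_nonpos_of_nonpos_of_nonneg (hμ j hj).le (sq_nonneg _)
  · simp [b.inner_eq_zero_of_mem_span_image hx hj]

end Eigenbasis

section FiniteDimensional

variable [FiniteDimensional 𝕜 E] {T T' : E →L[𝕜] E}

lemma finrank_le_negIndex {W : Submodule 𝕜 E} (hW : ∀ x ∈ W, x ≠ 0 → re ⟪T x, x⟫_𝕜 < 0) :
    finrank 𝕜 W ≤ T.negIndex :=
  le_csSup ⟨finrank 𝕜 E, by rintro _ ⟨V, rfl, -⟩; exact Submodule.finrank_le V⟩ ⟨W, rfl, hW⟩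

lemma negIndex_eq_card [Fintype ι] {b : OrthonormalBasis ι 𝕜 E} {μ : ι → ℝ}
    (hb : ∀ i, T (b i) = (μ i : 𝕜) • b i) : T.negIndex = #{i | μ i < 0} := by
  refine le_antisymm (csSup_le ⟨0, ⊥, finrank_bot .., by simp⟩ ?_) ?_
  · rintro _ ⟨W, rfl, hW⟩
    have hdisj : Disjoint W (Submodule.span 𝕜 (b '' ↑({i | ¬μ i < 0} : Finset ι))) := by
      refine Submodule.disjoint_def.2 fun x hxW hxU => by_contra fun hx0 => ?_
      have := le_re_inner_apply_self_of_mem_span_image hb (c := 0)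
        (fun i hi => not_lt.1 (mem_filter.1 hi).2) hxU
      exact (hW x hxW hx0).not_ge (by simpa using this)
    have := Submodule.finrank_add_finrank_le_of_disjoint hdisj
    rw [b.finrank_span_image, finrank_eq_card_basis b.toBasis] at this
    have := card_filter_add_card_filter_not (s := univ) fun i => μ i < 0
    rw [card_univ] at this
    omega
  · rw [← b.finrank_span_image]
    exact finrank_le_negIndex fun x hx hx0 => re_inner_apply_self_neg_of_mem_span_image hb
      (fun i hi => (mem_filter.1 hi).2) hx hx0

lemma exists_orthonormalBasis_apply_eq_smul (hT : (T : E →ₗ[𝕜] E).IsSymmetric) :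
    ∃ (b : OrthonormalBasis (Fin (finrank 𝕜 E)) 𝕜 E) (μ : Fin (finrank 𝕜 E) → ℝ),
      ∀ i, T (b i) = (μ i : 𝕜) • b i :=
  ⟨_, _, hT.apply_eigenvectorBasis rfl⟩

lemma negIndex_add_negIndex_neg (hT : (T : E →ₗ[𝕜] E).IsSymmetric)
    (hinj : Function.Injective T) :
    T.negIndex + (-T).negIndex = finrank 𝕜 E := by
  obtain ⟨b, μ, hb⟩ := exists_orthonormalBasis_apply_eq_smul hT
  have hμ : ∀ i, μ i ≠ 0 := fun i h => b.orthonormal.ne_zero i (hinj (by simp [hb, h]))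
  have hsign : ∀ i ∈ univ, -μ i < 0 ↔ ¬μ i < 0 := fun i _ => by
    rw [neg_lt_zero, not_lt, (hμ i).symm.le_iff_lt]
  rw [negIndex_eq_card hb, negIndex_eq_card (b := b) (μ := fun i => -μ i) fun i => by simp [hb],
    filter_congr hsign, card_filter_add_card_filter_not, card_univ, Fintype.card_fin]

lemma negIndex_le_negIndex_of_norm_sub_lt (hT : (T : E →ₗ[𝕜] E).IsSymmetric) {δ : ℝ}
    (hδ : ∀ x, δ * ‖x‖ ≤ ‖T x‖) (h : ‖T' - T‖ < δ) : T.negIndex ≤ T'.negIndex := by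
  obtain ⟨b, μ, hb⟩ := exists_orthonormalBasis_apply_eq_smul hT
  have hgap : ∀ i ∈ ({i | μ i < 0} : Finset _), μ i ≤ -δ := fun i hi => by
    have := hδ (b i)
    rw [hb, norm_smul, b.orthonormal.1 i, mul_one, mul_one, norm_ofReal,
      abs_of_neg (mem_filter.1 hi).2] at this
    linarith
  rw [negIndex_eq_card hb, ← b.finrank_span_image]
  refine finrank_le_negIndex fun x hx hx0 => ?_
  have hq := re_inner_apply_self_le_of_mem_span_image hb hgap hx
  have hpert : re ⟪T' x, x⟫_𝕜 - re ⟪T x, x⟫_𝕜 ≤ ‖T' - T‖ * ‖x‖ ^ 2 :=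
    calc re ⟪T' x, x⟫_𝕜 - re ⟪T x, x⟫_𝕜 = re ⟪(T' - T) x, x⟫_𝕜 := by
          rw [sub_apply, inner_sub_left, map_sub]
      _ ≤ ‖(T' - T) x‖ * ‖x‖ := (re_le_norm _).trans (norm_inner_le_norm _ _)
      _ ≤ ‖T' - T‖ * ‖x‖ ^ 2 := by
          rw [sq, ← mul_assoc]; gcongr; exact le_opNorm _ _
  have : 0 < ‖x‖ ^ 2 := by positivity
  nlinarith

lemma negIndex_eq_of_norm_sub_lt (hT : (T : E →ₗ[𝕜] E).IsSymmetric)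
    (hT' : (T' : E →ₗ[𝕜] E).IsSymmetric) (hinj' : Function.Injective T') {δ : ℝ}
    (hδ : ∀ x, δ * ‖x‖ ≤ ‖T x‖) (h : ‖T' - T‖ < δ) : T'.negIndex = T.negIndex := by
  have hinj : Function.Injective T := (injective_iff_map_eq_zero T).2 fun x hx => by
    have := hδ x
    rw [hx, norm_zero] at this
    exact norm_le_zero_iff.1 (nonpos_of_mul_nonpos_right this ((norm_nonneg _).trans_lt h))
  have hneg := negIndex_le_negIndex_of_norm_sub_lt hT hδ h
  have hpos := negIndex_le_negIndex_of_norm_sub_lt (T := -T) (T' := -T')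
    (fun x y => by simpa using hT x y) (by simpa using hδ) (by rwa [← neg_sub', norm_neg])
  have := negIndex_add_negIndex_neg hT hinj
  have := negIndex_add_negIndex_neg hT' hinj'
  omega

lemma eventually_negIndex_eq (hT : (T : E →ₗ[𝕜] E).IsSymmetric) (hinj : Function.Injective T) :
    ∀ᶠ T' : E →L[𝕜] E in 𝓝 T, (T' : E →ₗ[𝕜] E).IsSymmetric → Function.Injective T' →
      T'.negIndex = T.negIndex := by
  obtain ⟨δ, hδ0, hδ⟩ := antilipschitzWith_iff_exists_mul_le_norm.1 <|
    ((T : E →ₗ[𝕜] E).exists_antilipschitzWith (LinearMap.ker_eq_bot.2 hinj)).imp fun _ h => h.2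
  filter_upwards [ball_mem_nhds T hδ0] with T' hT' hsymm' hinj'
  exact negIndex_eq_of_norm_sub_lt hT hsymm' hinj' hδ (by rwa [mem_ball, dist_eq_norm] at hT')

theorem two_mul_negIndex_eq_finrank {V : Type*} [NormedAddCommGroup V] [NormedSpace ℝ V]
    (hV : 1 < Module.rank ℝ V) {F : V → E →L[𝕜] E} (hF : Continuous F)
    (hodd : ∀ v, F (-v) = -F v) (hsymm : ∀ v ∈ sphere (0 : V) 1, (F v : E →ₗ[𝕜] E).IsSymmetric)
    (hinj : ∀ v ∈ sphere (0 : V) 1, Function.Injective (F v)) {v : V}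
    (hv : v ∈ sphere (0 : V) 1) : 2 * (F v).negIndex = finrank 𝕜 E := by
  have hcont : ContinuousOn (fun v => (F v).negIndex) (sphere 0 1) := fun w hw => by
    rw [ContinuousWithinAt, nhds_discrete, tendsto_pure]
    filter_upwards [hF.continuousWithinAt.eventually
      (eventually_negIndex_eq (hsymm w hw) (hinj w hw)), self_mem_nhdsWithin] with u hu hus
    exact hu (hsymm u hus) (hinj u hus)
  have hconst : (F v).negIndex = (F (-v)).negIndex :=
    (isPreconnected_sphere hV 0 1).constant hcont hv (by simpa using hv)
  have := negIndex_add_negIndex_neg (hsymm v hv) (hinj v hv)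
  rw [hodd] at hconst
  omega

end FiniteDimensional

end ContinuousLinearMap

lemma Finset.prod_eq_neg_one_pow_card_mul_prod_abs {ι : Type*} [Fintype ι] (f : ι → ℝ) :
    ∏ i, f i = (-1) ^ #{i | f i < 0} * ∏ i, |f i| :=
  calc ∏ i, f i = ∏ i, (if f i < 0 then -1 else 1) * |f i| := prod_congr rfl fun i _ => by
        split_ifs with h
        · rw [abs_of_neg h, neg_one_mul, neg_neg]
        · rw [abs_of_nonneg (not_lt.1 h), one_mul]
    _ = _ := by rw [prod_mul_distrib, prod_ite, prod_const, prod_const, one_pow, mul_one]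

lemma Matrix.IsHermitian.det_eq_neg_one_pow_negIndex_mul {𝕜 n : Type*} [RCLike 𝕜] [Fintype n]
    [DecidableEq n] {A : Matrix n n 𝕜} (hA : A.IsHermitian) :
    A.det =
      (((-1) ^ (Matrix.toEuclideanCLM (𝕜 := 𝕜) A).negIndex * ∏ i, |hA.eigenvalues i| : ℝ) : 𝕜) := by
  have hb : ∀ i, Matrix.toEuclideanCLM (𝕜 := 𝕜) A (hA.eigenvectorBasis i)
      = (hA.eigenvalues i : 𝕜) • hA.eigenvectorBasis i := fun i =>
    WithLp.ofLp_injective 2 <| by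
      rw [Matrix.ofLp_toEuclideanCLM, WithLp.ofLp_smul, hA.mulVec_eigenvectorBasis,
        RCLike.real_smul_eq_coe_smul (K := 𝕜)]
  rw [ContinuousLinearMap.negIndex_eq_card hb, ← prod_eq_neg_one_pow_card_mul_prod_abs,
    hA.det_eq_prod_eigenvalues, ofReal_prod]

theorem Matrix.two_mul_negIndex_toEuclideanCLM_eq_card {𝕜 ι V : Type*} [RCLike 𝕜] [Fintype ι]
    [DecidableEq ι] [NormedAddCommGroup V] [NormedSpace ℝ V] [FiniteDimensional ℝ V]
    (hV : 1 < finrank ℝ V) (A : V →ₗ[ℝ] Matrix ι ι 𝕜)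
    (hA : ∀ v ∈ sphere (0 : V) 1, (A v).IsHermitian) (hinv : ∀ v ∈ sphere (0 : V) 1, IsUnit (A v))
    {v : V} (hv : v ∈ sphere (0 : V) 1) :
    2 * (Matrix.toEuclideanCLM (𝕜 := 𝕜) (A v)).negIndex = Fintype.card ι := by
  let Φ := Matrix.toEuclideanCLM (𝕜 := 𝕜) (n := ι)
  rw [ContinuousLinearMap.two_mul_negIndex_eq_finrank (F := fun v => Φ (A v))
    (by rwa [← finrank_eq_rank, Nat.one_lt_cast])
    ((LinearMap.continuous_of_finiteDimensional Φ.toAlgEquiv.toLinearMap).comp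
      A.continuous_of_finiteDimensional)
    (fun v => by simp only [map_neg])
    (fun v hv => Matrix.isSymmetric_toEuclideanLin_iff.mpr (hA v hv))
    (fun v hv => (ContinuousLinearMap.isUnit_iff_bijective.1 ((hinv v hv).map Φ)).1) hv,
    finrank_euclideanSpace]

theorem statement_12 (m n : ℕ) (hm : 2 ≤ m)
    (A : EuclideanSpace ℝ (Fin m) →ₗ[ℝ] Matrix (Fin (2 * n)) (Fin (2 * n)) ℂ)
    (hHerm : ∀ ν, (A ν).IsHermitian)
    (hinv : ∀ ν : EuclideanSpace ℝ (Fin m), ‖ν‖ = 1 → IsUnit (A ν)) :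
    ∀ ν : EuclideanSpace ℝ (Fin m),
      (∃ d : ℝ, (A ν).det = (d : ℂ)) ∧
      ((‖(A ν).det‖ : ℝ) : ℂ) = (-1 : ℂ) ^ n * (A ν).det := by
  intro ν
  obtain ⟨u, hu, hνu⟩ : ∃ u ∈ sphere (0 : EuclideanSpace ℝ (Fin m)) 1, ν = ‖ν‖ • u := by
    rcases eq_or_ne ν 0 with rfl | hν
    · exact ⟨EuclideanSpace.single ⟨0, by omega⟩ 1, by simp, by simp⟩
    · exact ⟨‖ν‖⁻¹ • ν, by simp [norm_smul, hν], (smul_inv_smul₀ (norm_ne_zero_iff.2 hν) ν).symm⟩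
  have hindex : (Matrix.toEuclideanCLM (𝕜 := ℂ) (A u)).negIndex = n := by
    have := Matrix.two_mul_negIndex_toEuclideanCLM_eq_card (by rwa [finrank_euclideanSpace_fin])
      A (fun v _ => hHerm v) (fun v hv => hinv v (mem_sphere_zero_iff_norm.1 hv)) hu
    rw [Fintype.card_fin] at this
    omega
  obtain ⟨r, hr, hdet⟩ : ∃ r : ℝ, 0 ≤ r ∧ (A ν).det = (((-1) ^ n * r : ℝ) : ℂ) := by
    refine ⟨‖ν‖ ^ (2 * n) * ∏ i, |(hHerm u).eigenvalues i|, by positivity, ?_⟩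
    conv_lhs => rw [hνu, map_smul, ← Complex.coe_smul, Matrix.det_smul,
      (hHerm u).det_eq_neg_one_pow_negIndex_mul, hindex, Fintype.card_fin,
      RCLike.ofReal_eq_complex_ofReal]
    push_cast
    ring
  refine ⟨⟨_, hdet⟩, ?_⟩
  rw [hdet, Complex.norm_real, Real.norm_eq_abs, abs_mul, abs_neg_one_pow, one_mul,
    abs_of_nonneg hr]
  push_cast
  rw [← mul_assoc, ← mul_pow]
  norm_num
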